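/- For all natural numbers j and k, the matrix element of the position operator in the Hermite basis is ∫_ℝ x·φ_j(x)·φ_k(x) dx = √((k+1)/2) if j = k+1, √(k/2) if j = k−1 (with k ≥ 1), and 0 otherwise. -/

import Mathlib

open MeasureTheory

/-- The `k`-th physicists' Hermite polynomial. -/
noncomputable def hermitePoly : ℕ → ℝ → ℝ
  | 0, _ => 1
  | 1, x => 2 * x
  | k + 2, x => 2 * x * hermitePoly (k + 1) x - 2 * (k + 1) * hermitePoly k x

/-- The `k`-th Hermite function φ_k(x) = π^(−1/4)·(2^k·k!)^(−1/2)·H_k(x)·e^(−x²/2). -/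
noncomputable def hermiteFun (k : ℕ) (x : ℝ) : ℝ :=
  Real.pi ^ (-(1 / 4 : ℝ)) * (Real.sqrt (2 ^ k * Nat.factorial k))⁻¹ *
    hermitePoly k x * Real.exp (-x ^ 2 / 2)

/-!
Multiplying the recurrence `H_{k+1} = 2x H_k - 2k H_{k-1}` by the normalising constants gives
`x φ_k = √((k+1)/2) φ_{k+1} + √(k/2) φ_{k-1}`, so the claim reduces to orthonormality of the
Hermite functions. For that, `H_k' = 2k H_{k-1}` and `(H_j e^{-x²})' = -H_{j+1} e^{-x²}`, so
integrating `(H_j H_k e^{-x²})'` over `ℝ` gives `⟨H_{j+1}, H_k⟩ = 2k ⟨H_j, H_{k-1}⟩` for the weight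
`e^{-x²}`; this descends to `⟨H_0, H_0⟩ = √π` or to `0`.
-/

open Polynomial

-- At `k = 0` the truncated `k - 1` is harmless: its coefficient `2k` vanishes.
lemma hermitePoly_succ (k : ℕ) (x : ℝ) :
    hermitePoly (k + 1) x = 2 * x * hermitePoly k x - 2 * k * hermitePoly (k - 1) x := by
  cases k <;> simp [hermitePoly]

lemma exists_polynomial_eval_eq_hermitePoly (k : ℕ) :
    ∃ P : ℝ[X], ∀ x, hermitePoly k x = P.eval x := by
  induction k using Nat.strong_induction_on with
  | _ k ih =>
    match k with
    | 0 => exact ⟨1, by simp [hermitePoly]⟩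
    | 1 => exact ⟨C 2 * X, by simp [hermitePoly]⟩
    | k + 2 =>
      obtain ⟨P₁, hP₁⟩ := ih (k + 1) (by omega)
      obtain ⟨P₀, hP₀⟩ := ih k (by omega)
      exact ⟨C 2 * X * P₁ - C (2 * ((k : ℝ) + 1)) * P₀, fun x => by simp [hermitePoly, hP₁, hP₀]⟩

lemma hasDerivAt_hermitePoly (k : ℕ) (x : ℝ) :
    HasDerivAt (hermitePoly k) (2 * k * hermitePoly (k - 1) x) x := by
  induction k using Nat.strong_induction_on generalizing x with
  | _ k ih =>
    match k with
    | 0 => exact (hasDerivAt_const x (1 : ℝ)).congr_deriv (by simp)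
    | 1 => simpa [hermitePoly] using (hasDerivAt_id x).const_mul (2 : ℝ)
    | k + 2 =>
      have hrec : hermitePoly (k + 2) =
          fun y => 2 * y * hermitePoly (k + 1) y - 2 * (k + 1) * hermitePoly k y := by
        funext y; rfl
      rw [hrec]
      refine ((((hasDerivAt_id x).const_mul 2).mul (ih (k + 1) (by omega) x)).sub
        ((ih k (by omega) x).const_mul (2 * ((k : ℝ) + 1)))).congr_deriv ?_
      rw [show k + 2 - 1 = k + 1 by omega, hermitePoly_succ k x, id]
      push_cast
      ring

lemma integrable_eval_mul_exp_neg_mul_sq {b : ℝ} (hb : 0 < b) (P : ℝ[X]) :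
    Integrable fun x : ℝ => P.eval x * Real.exp (-b * x ^ 2) := by
  induction P using Polynomial.induction_on' with
  | add p q hp hq => simpa [add_mul] using hp.fun_add hq
  | monomial n c =>
    have hpow := integrable_rpow_mul_exp_neg_mul_sq hb (s := n)
      (neg_one_lt_zero.trans_le n.cast_nonneg)
    simpa [mul_assoc] using hpow.const_mul c

lemma integrable_hermitePoly_mul_hermitePoly_mul_exp (j k : ℕ) :
    Integrable fun x : ℝ => hermitePoly j x * hermitePoly k x * Real.exp (-x ^ 2) := by
  obtain ⟨Pj, hPj⟩ := exists_polynomial_eval_eq_hermitePoly j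
  obtain ⟨Pk, hPk⟩ := exists_polynomial_eval_eq_hermitePoly k
  simpa [hPj, hPk] using integrable_eval_mul_exp_neg_mul_sq one_pos (Pj * Pk)

lemma hasDerivAt_hermitePoly_mul_hermitePoly_mul_exp (j k : ℕ) (x : ℝ) :
    HasDerivAt (fun y => hermitePoly j y * hermitePoly k y * Real.exp (-y ^ 2))
      (2 * k * (hermitePoly j x * hermitePoly (k - 1) x * Real.exp (-x ^ 2)) -
        hermitePoly (j + 1) x * hermitePoly k x * Real.exp (-x ^ 2)) x := by
  have hgauss : HasDerivAt (fun y : ℝ => Real.exp (-y ^ 2)) (-(2 * x) * Real.exp (-x ^ 2)) x := by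
    simpa [mul_comm] using ((hasDerivAt_pow 2 x).neg).exp
  refine (((hasDerivAt_hermitePoly j x).mul (hasDerivAt_hermitePoly k x)).mul
    hgauss).congr_deriv ?_
  rw [Pi.mul_apply, hermitePoly_succ]
  ring

lemma integral_hermitePoly_succ_mul (j k : ℕ) :
    ∫ x, hermitePoly (j + 1) x * hermitePoly k x * Real.exp (-x ^ 2) =
      2 * k * ∫ x, hermitePoly j x * hermitePoly (k - 1) x * Real.exp (-x ^ 2) := by
  have hzero := integral_eq_zero_of_hasDerivAt_of_integrable
    (hasDerivAt_hermitePoly_mul_hermitePoly_mul_exp j k)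
    (((integrable_hermitePoly_mul_hermitePoly_mul_exp j (k - 1)).const_mul _).sub
      (integrable_hermitePoly_mul_hermitePoly_mul_exp (j + 1) k))
    (integrable_hermitePoly_mul_hermitePoly_mul_exp j k)
  rw [integral_sub ((integrable_hermitePoly_mul_hermitePoly_mul_exp j (k - 1)).const_mul _)
    (integrable_hermitePoly_mul_hermitePoly_mul_exp (j + 1) k), integral_const_mul] at hzero
  linarith

lemma integral_hermitePoly_mul_hermitePoly (j k : ℕ) :
    ∫ x, hermitePoly j x * hermitePoly k x * Real.exp (-x ^ 2) =
      if j = k then 2 ^ k * k.factorial * √Real.pi else 0 := by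
  induction j generalizing k with
  | zero =>
    cases k with
    | zero => simpa [hermitePoly] using integral_gaussian 1
    | succ k =>
      simp_rw [mul_comm (hermitePoly 0 _)]
      simp [integral_hermitePoly_succ_mul]
  | succ j ih =>
    cases k with
    | zero => simp [integral_hermitePoly_succ_mul]
    | succ k =>
      rw [integral_hermitePoly_succ_mul, Nat.add_sub_cancel, ih k]
      split_ifs <;> simp_all [Nat.factorial_succ, pow_succ]
      ring

noncomputable def hermiteFunCoeff (k : ℕ) : ℝ :=
  Real.pi ^ (-(1 / 4 : ℝ)) * (√(2 ^ k * k.factorial))⁻¹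

lemma hermiteFun_eq (k : ℕ) (x : ℝ) :
    hermiteFun k x = hermiteFunCoeff k * hermitePoly k x * Real.exp (-x ^ 2 / 2) :=
  rfl

lemma hermiteFun_mul_hermiteFun (j k : ℕ) (x : ℝ) :
    hermiteFun j x * hermiteFun k x = hermiteFunCoeff j * hermiteFunCoeff k *
      (hermitePoly j x * hermitePoly k x * Real.exp (-x ^ 2)) := by
  have hexp : Real.exp (-x ^ 2) = Real.exp (-x ^ 2 / 2) * Real.exp (-x ^ 2 / 2) := by
    rw [← Real.exp_add]; ring_nf
  rw [hermiteFun_eq, hermiteFun_eq, hexp]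
  ring

lemma integrable_hermiteFun_mul_hermiteFun (j k : ℕ) :
    Integrable fun x => hermiteFun j x * hermiteFun k x := by
  simpa only [hermiteFun_mul_hermiteFun] using
    (integrable_hermitePoly_mul_hermitePoly_mul_exp j k).const_mul _

lemma hermiteFunCoeff_sq_mul (k : ℕ) :
    hermiteFunCoeff k ^ 2 * (2 ^ k * k.factorial * √Real.pi) = 1 := by
  have hpi : (Real.pi ^ (-(1 / 4 : ℝ))) ^ 2 * √Real.pi = 1 := by
    rw [Real.sqrt_eq_rpow, ← Real.rpow_natCast, ← Real.rpow_mul Real.pi_pos.le,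
      ← Real.rpow_add Real.pi_pos]
    norm_num
  have hsq : √(2 ^ k * k.factorial : ℝ) ^ 2 = 2 ^ k * k.factorial := Real.sq_sqrt (by positivity)
  rw [hermiteFunCoeff, mul_pow, inv_pow, hsq]
  field_simp
  linear_combination hpi

theorem integral_hermiteFun_mul_hermiteFun (j k : ℕ) :
    ∫ x, hermiteFun j x * hermiteFun k x = if j = k then 1 else 0 := by
  simp only [hermiteFun_mul_hermiteFun]
  rw [integral_const_mul, integral_hermitePoly_mul_hermitePoly]
  split_ifs with h
  · subst h
    linear_combination hermiteFunCoeff_sq_mul j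
  · simp

lemma hermiteFunCoeff_div_two (k : ℕ) :
    hermiteFunCoeff k / 2 = √(((k : ℝ) + 1) / 2) * hermiteFunCoeff (k + 1) := by
  have hfac : (2 ^ (k + 1) * (k + 1).factorial : ℝ) = (2 * (k + 1)) * (2 ^ k * k.factorial) := by
    push_cast [Nat.factorial_succ]; ring
  have hhalf : √(((k : ℝ) + 1) / 2) = √(2 * (k + 1)) / 2 := by
    rw [show ((k : ℝ) + 1) / 2 = (2 * (k + 1)) / 2 ^ 2 by ring, Real.sqrt_div' _ (by positivity),
      Real.sqrt_sq zero_le_two]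
  have hpos : 0 < √(2 * ((k : ℝ) + 1)) := by positivity
  have hpos' : 0 < √(2 ^ k * k.factorial : ℝ) := by positivity
  rw [hermiteFunCoeff, hermiteFunCoeff, hfac,
    Real.sqrt_mul (x := 2 * ((k : ℝ) + 1)) (by positivity), hhalf]
  generalize √(2 ^ k * k.factorial : ℝ) = s at *
  field_simp

lemma natCast_mul_hermiteFunCoeff (k : ℕ) :
    k * hermiteFunCoeff k = √((k : ℝ) / 2) * hermiteFunCoeff (k - 1) := by
  cases k with
  | zero => simp
  | succ k =>
    have hsq : √(((k : ℝ) + 1) / 2) ^ 2 = ((k : ℝ) + 1) / 2 := Real.sq_sqrt (by positivity)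
    rw [Nat.add_sub_cancel, ← div_mul_cancel₀ (hermiteFunCoeff k) two_ne_zero,
      hermiteFunCoeff_div_two]
    push_cast
    linear_combination (-2 * hermiteFunCoeff (k + 1)) * hsq

lemma mul_hermiteFun (k : ℕ) (x : ℝ) :
    x * hermiteFun k x =
      √(((k : ℝ) + 1) / 2) * hermiteFun (k + 1) x + √((k : ℝ) / 2) * hermiteFun (k - 1) x := by
  have hx : x * hermitePoly k x = hermitePoly (k + 1) x / 2 + k * hermitePoly (k - 1) x := by
    rw [hermitePoly_succ]; ring
  calc x * hermiteFun k x
      = hermiteFunCoeff k / 2 * hermitePoly (k + 1) x * Real.exp (-x ^ 2 / 2) +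
          k * hermiteFunCoeff k * hermitePoly (k - 1) x * Real.exp (-x ^ 2 / 2) := by
        rw [hermiteFun_eq]
        linear_combination (hermiteFunCoeff k * Real.exp (-x ^ 2 / 2)) * hx
    _ = _ := by
        rw [hermiteFunCoeff_div_two, natCast_mul_hermiteFunCoeff, hermiteFun_eq, hermiteFun_eq]
        ring

/-- Matrix elements of the position operator in the Hermite basis:
`∫ x·φ_j(x)·φ_k(x) dx = √((k+1)/2)` if `j = k+1`, `√(k/2)` if `j = k−1` (i.e. `k = j+1`),
and `0` otherwise. -/
theorem hermiteFun_position_matrix_element (j k : ℕ) :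
    ∫ x : ℝ, x * hermiteFun j x * hermiteFun k x =
      if j = k + 1 then Real.sqrt (((k : ℝ) + 1) / 2)
      else if k = j + 1 then Real.sqrt ((k : ℝ) / 2)
      else 0 := by
  have hint := integrable_hermiteFun_mul_hermiteFun
  simp_rw [mul_hermiteFun, add_mul, mul_assoc]
  rw [integral_add ((hint _ _).const_mul _) ((hint _ _).const_mul _), integral_const_mul,
    integral_const_mul, integral_hermiteFun_mul_hermiteFun, integral_hermiteFun_mul_hermiteFun]
  split_ifs <;> subst_vars <;> simp <;> omega
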